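/- arXiv:0901.3605 — 7 statements merged into one kernel-verified Lean document; each statement's English description precedes it below -/
import Mathlib

section
/- Let $\|\cdot\|$ be a norm on $\mathbb{R}^d$ and let $\nu$ be a Borel probability measure on $\mathbb{R}^d$. For $x\in\mathbb{R}^d$ and $r>0$ write $\bar B_r(x)=\{y:\|y-x\|\le r\}$ and $S_r(x)=\{y:\|y-x\|=r\}$ (the topological boundary of the ball). Then for $\nu$-almost every $x$ one has $\nu(\bar B_r(x))>0$ for all $r>0$ and $\lim_{r\searrow 0}\nu(S_r(x))/\nu(\bar B_r(x))=0$. -/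
/-!
Call a set `A` sphere-null for `ν` if every sphere centred at a point of `A` meets `A` in a
`ν`-null set. Every set of positive measure contains a sphere-null subset of positive measure:
otherwise one could cut `A ⊇ A ∩ S_{r₀}(x₀) ⊇ A ∩ S_{r₀}(x₀) ∩ S_{r₁}(x₁) ⊇ …` forever, producing
points `x_j` lying on all earlier spheres `S_{rᵢ}(xᵢ)`, and compactness rules out such chains in a
finite-dimensional normed space. By exhaustion, countably many sphere-null sets cover `ν`-almost
everything. At a point `x` of a sphere-null set `A` we have `ν(S_r(x)) ≤ ν(Aᶜ ∩ B̄_r(x))`, and by the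
Besicovitch density theorem the ratio of the latter to `ν(B̄_r(x))` tends to `0` at almost every
point of `A`. The balls have positive measure at every point of the support of `ν`.
-/

open MeasureTheory Filter Topology Metric

section Chains

variable {E : Type*} [NormedAddCommGroup E] [NormedSpace ℝ E]

lemma norm_inv_norm_smul_self {v : E} (hv : v ≠ 0) : ‖‖v‖⁻¹ • v‖ = 1 := by
  rw [norm_smul, norm_inv, norm_norm, inv_mul_cancel₀ (norm_ne_zero_iff.mpr hv)]

lemma norm_sub_lt_of_norm_le_of_norm_sub_normalize_lt {v w : E} (hw : w ≠ 0) (hwv : ‖w‖ ≤ ‖v‖)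
    (h : ‖‖w‖⁻¹ • w - ‖v‖⁻¹ • v‖ < 1) : ‖w - v‖ < ‖v‖ := by
  have hv : v ≠ 0 := norm_pos_iff.mp ((norm_pos_iff.mpr hw).trans_le hwv)
  have hsplit : w - v = ‖w‖ • (‖w‖⁻¹ • w - ‖v‖⁻¹ • v) - (‖v‖ - ‖w‖) • (‖v‖⁻¹ • v) := by
    rw [smul_sub, sub_smul, smul_inv_smul₀ (norm_ne_zero_iff.mpr hw),
      smul_inv_smul₀ (norm_ne_zero_iff.mpr hv)]
    abel
  calc ‖w - v‖ ≤ ‖w‖ * ‖‖w‖⁻¹ • w - ‖v‖⁻¹ • v‖ + (‖v‖ - ‖w‖) * 1 := by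
        rw [hsplit]
        refine (norm_sub_le _ _).trans_eq ?_
        rw [norm_smul, norm_smul, norm_inv_norm_smul_self hv, norm_norm,
          Real.norm_of_nonneg (sub_nonneg.mpr hwv)]
    _ < ‖w‖ * 1 + (‖v‖ - ‖w‖) * 1 := by gcongr
    _ = ‖v‖ := by ring

/- A limit point `z` of the chain lies on every sphere `S_{rᵢ}(xᵢ)`. Two late points `x_a`, `x_b`
(`a < b`, `r_b ≤ r_a`) seen from `z` in nearly the same direction then satisfy
`‖x_b - x_a‖ < ‖x_a - z‖ = r_a`. -/
lemma not_forall_lt_dist_eq [ProperSpace E] (x : ℕ → E) {r : ℕ → ℝ} (hr : ∀ n, 0 < r n) :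
    ¬ ∀ i j, i < j → dist (x j) (x i) = r i := by
  intro hc
  have hball : ∀ n, x n ∈ closedBall (x 0) (r 0) := by
    intro n
    rcases n.eq_zero_or_pos with rfl | hn
    · exact mem_closedBall_self (hr 0).le
    · exact (hc 0 n hn).le
  obtain ⟨z, -, φ, hφ, hφz⟩ := tendsto_subseq_of_bounded isBounded_closedBall hball
  have hz : ∀ i, ‖x i - z‖ = r i := by
    intro i
    have hev : ∀ᶠ k in atTop, x (φ k) ∈ sphere (x i) (r i) := by
      filter_upwards [eventually_gt_atTop i] with k hk
      exact hc i (φ k) (hk.trans_le hφ.le_apply)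
    rw [← dist_eq_norm, dist_comm]
    exact isClosed_sphere.mem_of_tendsto hφz hev
  have hrφ : Tendsto (r ∘ φ) atTop (𝓝 0) := by
    simpa only [Function.comp_def, hz] using tendsto_iff_norm_sub_tendsto_zero.mp hφz
  have hxz : ∀ n, x n - z ≠ 0 := fun n => norm_pos_iff.mp ((hz n).symm ▸ hr n)
  set u : ℕ → E := fun n => ‖x n - z‖⁻¹ • (x n - z)
  have hu : ∀ n, u n ∈ sphere (0 : E) 1 := fun n => by
    rw [mem_sphere_zero_iff_norm]
    exact norm_inv_norm_smul_self (hxz n)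
  obtain ⟨w, -, ψ, hψ, hψu⟩ := (isCompact_sphere (0 : E) 1).tendsto_subseq fun k => hu (φ k)
  obtain ⟨M, hM⟩ := Metric.cauchySeq_iff'.mp hψu.cauchySeq 1 one_pos
  obtain ⟨L, hML, hrL⟩ : ∃ L, M < L ∧ r (φ (ψ L)) ≤ r (φ (ψ M)) :=
    ((eventually_gt_atTop M).and
      ((hrφ.comp hψ.tendsto_atTop).eventually (eventually_le_nhds (hr _)))).exists
  have hshort := norm_sub_lt_of_norm_le_of_norm_sub_normalize_lt
    (v := x (φ (ψ M)) - z) (hxz (φ (ψ L))) (by rwa [hz, hz])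
    (by simpa [u, dist_eq_norm] using hM L hML.le)
  rw [sub_sub_sub_cancel_right, hz, ← dist_eq_norm, hc _ _ (hφ (hψ hML))] at hshort
  exact lt_irrefl _ hshort

end Chains

lemma exists_countable_ae_cover_of_forall_exists_subset {α : Type*} [MeasurableSpace α]
    {μ : Measure α} [SFinite μ] {P : Set α → Prop}
    (h : ∀ U, MeasurableSet U → 0 < μ U → ∃ A ⊆ U, MeasurableSet A ∧ 0 < μ A ∧ P A) :
    ∃ D : Set (Set α), D.Countable ∧ (∀ A ∈ D, MeasurableSet A ∧ P A) ∧
      ∀ᵐ x ∂μ, x ∈ ⋃₀ D := by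
  obtain ⟨D, hDC, hDc, hcover⟩ :=
    μ.exists_ae_subset_biUnion_countable (C := {A | MeasurableSet A ∧ P A}) fun _ hA => hA.1
  refine ⟨D, hDc, hDC, mem_ae_iff.mpr ?_⟩
  by_contra hpos
  have hDmeas : MeasurableSet (⋃₀ D) := .sUnion hDc fun A hA => (hDC hA).1
  obtain ⟨A, hAD, hAmeas, hApos, hA⟩ := h _ hDmeas.compl (pos_iff_ne_zero.mpr hpos)
  have hnull : μ (A \ ⋃₀ D) = 0 := ae_le_set.mp (hcover A ⟨hAmeas, hA⟩)
  rw [sdiff_eq_left.mpr (Set.subset_compl_iff_disjoint_right.mp hAD)] at hnull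
  exact hApos.ne' hnull

section SphereNull

variable {E : Type*} [NormedAddCommGroup E] [MeasurableSpace E]

def IsSphereNull (ν : Measure E) (A : Set E) : Prop :=
  ∀ x ∈ A, ∀ r : ℝ, 0 < r → ν (A ∩ sphere x r) = 0

lemma IsSphereNull.measure_sphere_le {ν : Measure E} {A : Set E} (hA : IsSphereNull ν A)
    {x : E} (hx : x ∈ A) {r : ℝ} (hr : 0 < r) :
    ν (sphere x r) ≤ ν (Aᶜ ∩ closedBall x r) :=
  calc ν (sphere x r) = ν (sphere x r \ (A ∩ sphere x r)) :=
        (measure_sdiff_null (hA x hx r hr)).symm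
    _ ≤ ν (Aᶜ ∩ closedBall x r) :=
      measure_mono fun _ hy => ⟨fun hyA => hy.2 ⟨hyA, hy.1⟩, sphere_subset_closedBall hy.1⟩

lemma exists_subset_isSphereNull [NormedSpace ℝ E] [ProperSpace E] [OpensMeasurableSpace E]
    (ν : Measure E) {U : Set E} (hU : MeasurableSet U) (hpos : 0 < ν U) :
    ∃ A ⊆ U, MeasurableSet A ∧ 0 < ν A ∧ IsSphereNull ν A := by
  by_contra! hbad
  let P : Set E → Prop := fun A => A ⊆ U ∧ MeasurableSet A ∧ 0 < ν A
  have hstep : ∀ A, P A → ∃ y ∈ A, ∃ s > 0, P (A ∩ sphere y s) := by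
    rintro A ⟨hAU, hAmeas, hApos⟩
    have hnot : ¬ IsSphereNull ν A := hbad A hAU hAmeas hApos
    simp only [IsSphereNull, not_forall] at hnot
    obtain ⟨y, hy, s, hs, hys⟩ := hnot
    exact ⟨y, hy, s, hs, Set.inter_subset_left.trans hAU,
      hAmeas.inter isClosed_sphere.measurableSet, pos_iff_ne_zero.mpr hys⟩
  choose! y hy s hs hP using hstep
  let M : ℕ → Set E := fun n => (fun A => A ∩ sphere (y A) (s A))^[n] U
  have hM_succ : ∀ n, M (n + 1) = M n ∩ sphere (y (M n)) (s (M n)) := fun n =>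
    Function.iterate_succ_apply' _ n U
  have hPM : ∀ n, P (M n) := by
    intro n
    induction n with
    | zero => exact ⟨subset_rfl, hU, hpos⟩
    | succ n ih => rw [hM_succ]; exact hP _ ih
  have hM_anti : Antitone M := antitone_nat_of_succ_le fun n => by
    rw [hM_succ]; exact Set.inter_subset_left
  refine not_forall_lt_dist_eq (fun n => y (M n)) (fun n => hs _ (hPM n)) fun i j hij => ?_
  have hyj : y (M j) ∈ M (i + 1) := hM_anti (Nat.succ_le_of_lt hij) (hy _ (hPM j))
  rw [hM_succ] at hyj
  exact hyj.2

end SphereNull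

/-- For a Borel probability measure `ν` on `ℝ^d` (formalized as a finite-dimensional real
normed space, so that balls and spheres are taken with respect to an arbitrary norm),
for `ν`-a.e. `x` all closed balls around `x` have positive measure and the ratio
`ν(S_r(x))/ν(B̄_r(x))` of the measure of the sphere to that of the closed ball tends to
`0` as `r ↘ 0`. -/
theorem sphere_ball_ratio_tendsto_zero {E : Type*} [NormedAddCommGroup E]
    [NormedSpace ℝ E] [FiniteDimensional ℝ E] [MeasurableSpace E] [BorelSpace E]
    (ν : Measure E) [IsProbabilityMeasure ν] :
    ∀ᵐ x ∂ν,
      (∀ r : ℝ, 0 < r → 0 < ν (Metric.closedBall x r)) ∧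
      Tendsto (fun r : ℝ => ν (Metric.sphere x r) / ν (Metric.closedBall x r))
        (nhdsWithin 0 (Set.Ioi 0)) (nhds 0) := by
  obtain ⟨D, hDc, hD, hcover⟩ := exists_countable_ae_cover_of_forall_exists_subset
    fun U hU hpos => exists_subset_isSphereNull ν hU hpos
  have hdensity := (ae_ball_iff hDc).mpr fun A hA =>
    Besicovitch.ae_tendsto_measure_inter_div_of_measurableSet ν (hD A hA).1.compl
  filter_upwards [ν.support_mem_ae, hcover, hdensity] with x hsupp ⟨A, hAD, hxA⟩ hx
  refine ⟨fun r hr => (ν.mem_support_iff_forall x).mp hsupp _ (closedBall_mem_nhds x hr), ?_⟩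
  have hlim := hx A hAD
  rw [Set.indicator_of_notMem (Set.notMem_compl_iff.mpr hxA)] at hlim
  refine tendsto_of_tendsto_of_tendsto_of_le_of_le' tendsto_const_nhds hlim
    (Eventually.of_forall fun r => zero_le) ?_
  filter_upwards [self_mem_nhdsWithin] with r hr
  exact ENNReal.div_le_div_right ((hD A hAD).2.measure_sphere_le hxA hr) _
end

section
/- Let $X$ be a metric space satisfying the Besicovitch property with constant $C$. Let $E\subseteq X$ be finite, let $\mathcal{U}$ be a carpet over $E$, let $A,B\subseteq E$ and let $t>0$. If $|A\cap F|>t\cdot|B\cap F|$ for every $F\in\mathcal{U}$, then $C\,|A|\ge t\,|B|$. -/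
/-- A metric space satisfies the Besicovitch property with constant `C` if for every
finite set `E` and every carpet over `E` (a family of balls, one centered at each point
of `E`), there is a subfamily which covers `E` and has multiplicity at most `C`. -/
def BesicovitchProperty (X : Type*) [MetricSpace X] (C : ℕ) : Prop :=
  ∀ (E : Finset X) (r : X → ℝ), (∀ x ∈ E, 0 < r x) →
    ∃ S : Finset X, S ⊆ E ∧ (∀ x ∈ E, ∃ y ∈ S, x ∈ Metric.ball y (r y)) ∧
      ∀ z : X, Set.ncard {y : X | y ∈ S ∧ z ∈ Metric.ball y (r y)} ≤ C

theorem besicovitch_high_frequency {X : Type*} [MetricSpace X] (C : ℕ)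
    (hbes : BesicovitchProperty X C)
    (E : Finset X) (r : X → ℝ) (hr : ∀ x ∈ E, 0 < r x)
    (A B : Finset X) (hA : A ⊆ E) (hB : B ⊆ E) (t : ℝ) (ht : 0 < t)
    (hgt : ∀ x ∈ E,
      t * (Set.ncard {b : X | b ∈ B ∧ b ∈ Metric.ball x (r x)} : ℝ)
        < (Set.ncard {a : X | a ∈ A ∧ a ∈ Metric.ball x (r x)} : ℝ)) :
    t * (B.card : ℝ) ≤ (C : ℝ) * (A.card : ℝ) := by
  classical
  obtain ⟨S, hSE, hcov, hmul⟩ := hbes E r hr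
  set nA : X → ℕ := fun x => (A.filter (fun a => a ∈ Metric.ball x (r x))).card with hnA
  set nB : X → ℕ := fun x => (B.filter (fun b => b ∈ Metric.ball x (r x))).card with hnB
  have hsetA : ∀ x : X, {a : X | a ∈ A ∧ a ∈ Metric.ball x (r x)}
      = ↑(A.filter (fun a => a ∈ Metric.ball x (r x))) := by
    intro x; ext a; simp
  have hsetB : ∀ x : X, {b : X | b ∈ B ∧ b ∈ Metric.ball x (r x)}
      = ↑(B.filter (fun b => b ∈ Metric.ball x (r x))) := by
    intro x; ext b; simp
  -- step 1 : |B| ≤ ∑_{y ∈ S} nB y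
  have hBsub : B ⊆ S.biUnion (fun y => B.filter (fun b => b ∈ Metric.ball y (r y))) := by
    intro b hb
    obtain ⟨y, hyS, hby⟩ := hcov b (hB hb)
    exact Finset.mem_biUnion.2 ⟨y, hyS, Finset.mem_filter.2 ⟨hb, hby⟩⟩
  have h1 : B.card ≤ ∑ y ∈ S, nB y :=
    le_trans (Finset.card_le_card hBsub) Finset.card_biUnion_le
  -- step 2 : t * nB y ≤ nA y for y ∈ S
  have h2 : ∀ y ∈ S, t * (nB y : ℝ) ≤ (nA y : ℝ) := by
    intro y hy
    have := hgt y (hSE hy)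
    rw [hsetA y, hsetB y, Set.ncard_coe_finset, Set.ncard_coe_finset] at this
    exact le_of_lt this
  -- step 3 : ∑_{y ∈ S} nA y ≤ C * |A|
  have hswap : ∑ y ∈ S, nA y
      = ∑ a ∈ A, (S.filter (fun y => a ∈ Metric.ball y (r y))).card := by
    simp only [hnA, Finset.card_filter]
    exact Finset.sum_comm
  have h3 : ∑ y ∈ S, nA y ≤ C * A.card := by
    rw [hswap]
    calc ∑ a ∈ A, (S.filter (fun y => a ∈ Metric.ball y (r y))).card
        ≤ ∑ _a ∈ A, C := by
          refine Finset.sum_le_sum fun a _ => ?_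
          have := hmul a
          have hset : {y : X | y ∈ S ∧ a ∈ Metric.ball y (r y)}
              = ↑(S.filter (fun y => a ∈ Metric.ball y (r y))) := by
            ext y; simp
          rwa [hset, Set.ncard_coe_finset] at this
      _ = A.card * C := by rw [Finset.sum_const, smul_eq_mul]
      _ = C * A.card := Nat.mul_comm _ _
  -- combine
  calc t * (B.card : ℝ) ≤ t * (∑ y ∈ S, nB y : ℕ) := by
        exact mul_le_mul_of_nonneg_left (by exact_mod_cast h1) ht.le
    _ = ∑ y ∈ S, t * (nB y : ℝ) := by push_cast; rw [Finset.mul_sum]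
    _ ≤ ∑ y ∈ S, (nA y : ℝ) := Finset.sum_le_sum h2
    _ ≤ (C : ℝ) * A.card := by
        rw [← Nat.cast_sum]
        exact_mod_cast h3
end

section
/- Let $X$ be a metric space satisfying the Besicovitch property with constant $C$. Then every incremental sequence of balls in $X$ has multiplicity $\le C$: if $B_{r(1)}(x_1),\dots,B_{r(N)}(x_N)$ is incremental, then no point of $X$ lies in more than $C$ of these balls. -/
/-!
Fix a point `z` and keep only the balls of the sequence that contain `z`; their radii are
positive. In an incremental sequence the center `x i` lies in no ball other than its own: an
earlier ball is excluded by definition, and if `x i` were in a later, hence smaller, ball `B_j`,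
then `x j` would lie in `B_i`. So a subfamily of the carpet over these centers can only cover them
if it keeps every ball, and the Besicovitch property bounds the multiplicity of the whole family.
-/

open Metric

theorem eq_of_mem_ball_of_incremental {X ι : Type*} [MetricSpace X] [LinearOrder ι]
    {x : ι → X} {r : ι → ℝ} (hmono : Antitone r)
    (hinc : ∀ i j, j < i → x i ∉ ball (x j) (r j)) {i j : ι} (h : x i ∈ ball (x j) (r j)) :
    i = j := by
  rcases lt_trichotomy i j with hij | rfl | hji
  · refine absurd ?_ (hinc j i hij)
    rw [mem_ball_comm]
    exact lt_of_lt_of_le h (hmono hij.le)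
  · rfl
  · exact absurd h (hinc i j hji)

namespace BesicovitchProperty

variable {X : Type*} [MetricSpace X] {C : ℕ}

theorem ncard_le_of_forall_mem_ball_eq (hbes : BesicovitchProperty X C) (E : Finset X)
    (r : X → ℝ) (hpos : ∀ y ∈ E, 0 < r y) (hsep : ∀ y ∈ E, ∀ w ∈ E, y ∈ ball w (r w) → y = w)
    (z : X) : Set.ncard {y : X | y ∈ E ∧ z ∈ ball y (r y)} ≤ C := by
  obtain ⟨S, hSE, hcov, hmul⟩ := hbes E r hpos
  have hES : E ⊆ S := fun y hy => by
    obtain ⟨w, hwS, hyw⟩ := hcov y hy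
    rwa [hsep y hy w (hSE hwS) hyw]
  rw [hES.antisymm hSE]
  exact hmul z

theorem ncard_le_of_forall_center_mem_ball_eq {ι : Type*} (hbes : BesicovitchProperty X C)
    (s : Finset ι) (x : ι → X) (r : ι → ℝ) (hpos : ∀ i ∈ s, 0 < r i)
    (hsep : ∀ i ∈ s, ∀ j ∈ s, x i ∈ ball (x j) (r j) → i = j) (z : X) :
    Set.ncard {i : ι | i ∈ s ∧ z ∈ ball (x i) (r i)} ≤ C := by
  classical
  obtain rfl | ⟨i₀, -⟩ := s.eq_empty_or_nonempty
  · simp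
  have : Nonempty ι := ⟨i₀⟩
  have hinj : Set.InjOn x s := fun i hi j hj hij =>
    hsep i hi j hj (by rw [hij]; exact mem_ball_self (hpos j hj))
  set r' : X → ℝ := r ∘ Function.invFunOn x s
  have hr' : ∀ i ∈ s, r' (x i) = r i := fun i hi => by
    simp only [r', Function.comp_apply, hinj.leftInvOn_invFunOn hi]
  have himage : x '' {i | i ∈ s ∧ z ∈ ball (x i) (r i)} =
      {y | y ∈ s.image x ∧ z ∈ ball y (r' y)} := by
    ext y
    simp only [Set.mem_image, Finset.mem_image]
    constructor
    · rintro ⟨i, ⟨hi, hz⟩, rfl⟩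
      exact ⟨⟨i, hi, rfl⟩, hr' i hi ▸ hz⟩
    · rintro ⟨⟨i, hi, rfl⟩, hz⟩
      exact ⟨i, ⟨hi, hr' i hi ▸ hz⟩, rfl⟩
  rw [← (hinj.mono fun i hi => hi.1).ncard_image, himage]
  refine hbes.ncard_le_of_forall_mem_ball_eq _ r' ?_ ?_ z
  · simp only [Finset.forall_mem_image]
    exact fun i hi => (hr' i hi).symm ▸ hpos i hi
  · simp only [Finset.forall_mem_image]
    intro i hi j hj h
    rw [hr' j hj] at h
    rw [hsep i hi j hj h]

end BesicovitchProperty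

theorem incremental_multiplicity_general {X : Type*} [MetricSpace X] (C : ℕ)
    (hbes : BesicovitchProperty X C)
    (N : ℕ) (x : Fin N → X) (r : Fin N → ℝ)
    (hmono : ∀ i j : Fin N, i ≤ j → r j ≤ r i)
    (hinc : ∀ i j : Fin N, j < i → x i ∉ Metric.ball (x j) (r j)) :
    ∀ z : X, Set.ncard {i : Fin N | z ∈ Metric.ball (x i) (r i)} ≤ C := by
  classical
  intro z
  set s := Finset.univ.filter fun i => z ∈ ball (x i) (r i)
  have hpos : ∀ i ∈ s, 0 < r i := fun i hi =>
    dist_nonneg.trans_lt (mem_ball'.mp (Finset.mem_filter.mp hi).2)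
  have hsep : ∀ i ∈ s, ∀ j ∈ s, x i ∈ ball (x j) (r j) → i = j := fun _ _ _ _ =>
    eq_of_mem_ball_of_incremental (fun i j => hmono i j) hinc
  simpa [s] using hbes.ncard_le_of_forall_center_mem_ball_eq s x r hpos hsep z

/-- If `X` has the Besicovitch property with constant `C`, then every incremental
sequence of balls (non-increasing radii, each center outside all previous balls)
has multiplicity at most `C`. -/
theorem incremental_multiplicity {X : Type*} [MetricSpace X] (C : ℕ)
    (hbes : BesicovitchProperty X C)
    (N : ℕ) (x : Fin N → X) (r : Fin N → ℝ)
    (hrpos : ∀ i, 0 < r i)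
    (hmono : ∀ i j : Fin N, i ≤ j → r j ≤ r i)
    (hinc : ∀ i j : Fin N, j < i → x i ∉ Metric.ball (x j) (r j)) :
    ∀ z : X, Set.ncard {i : Fin N | z ∈ Metric.ball (x i) (r i)} ≤ C :=
  incremental_multiplicity_general C hbes N x r hmono hinc
end

section
/- Let $X$ be a metric space in which every incremental sequence of balls has multiplicity $\le C$. Then for every finite $E\subseteq X$ and every carpet $\mathcal{U}$ over $E$ there is a subfamily of $\mathcal{U}$ which, ordered by non-increasing radius, forms an incremental sequence, covers $E$, and has multiplicity $\le C$. -/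
/-!
Greedy selection: take a point of `E` of largest radius, discard the points of `E` lying in its
ball, and recurse on the rest. The chosen balls form an incremental sequence that covers `E`,
so the hypothesis on `X` bounds their multiplicity by `C`.
-/

open Metric

section

variable {X : Type*} [PseudoMetricSpace X] {N : ℕ}

structure IsIncremental (x : Fin N → X) (ρ : Fin N → ℝ) : Prop where
  antitone : Antitone ρ
  notMem_ball : ∀ i j, j < i → x i ∉ ball (x j) (ρ j)

namespace IsIncremental

theorem injective {x : Fin N → X} {ρ : Fin N → ℝ} (h : IsIncremental x ρ) (hρ : ∀ i, 0 < ρ i) :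
    Function.Injective x := by
  intro i j hij
  by_contra hne
  rcases lt_or_gt_of_ne hne with hlt | hlt
  · exact h.notMem_ball j i hlt (hij ▸ mem_ball_self (hρ i))
  · exact h.notMem_ball i j hlt (hij ▸ mem_ball_self (hρ j))

theorem cons {x : Fin N → X} {ρ : Fin N → ℝ} (h : IsIncremental x ρ) {x₀ : X} {ρ₀ : ℝ}
    (hρ : ∀ i, ρ i ≤ ρ₀) (hx : ∀ i, x i ∉ ball x₀ ρ₀) :
    IsIncremental (Fin.cons x₀ x : Fin (N + 1) → X) (Fin.cons ρ₀ ρ) where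
  antitone := by
    intro i j hij
    induction j using Fin.cases with
    | zero => rw [Fin.le_zero_iff.mp hij]
    | succ j =>
      induction i using Fin.cases with
      | zero => exact hρ j
      | succ i => exact h.antitone (Fin.succ_le_succ_iff.mp hij)
  notMem_ball := by
    intro i j hji
    induction i using Fin.cases with
    | zero => exact absurd hji (Fin.not_lt_zero j)
    | succ i =>
      induction j using Fin.cases with
      | zero => exact hx i
      | succ j => exact h.notMem_ball i j (Fin.succ_lt_succ_iff.mp hji)

end IsIncremental

theorem exists_incremental_cover (r : X → ℝ) (E : Finset X) (hr : ∀ x ∈ E, 0 < r x) :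
    ∃ (N : ℕ) (x : Fin N → X), (∀ i, x i ∈ E) ∧ IsIncremental x (fun i => r (x i)) ∧
      ∀ e ∈ E, ∃ i, e ∈ ball (x i) (r (x i)) := by
  classical
  induction E using Finset.strongInduction with
  | _ E ih =>
  rcases E.eq_empty_or_nonempty with rfl | hE
  · exact ⟨0, Fin.elim0, fun i => i.elim0, ⟨fun i => i.elim0, fun i => i.elim0⟩, by simp⟩
  obtain ⟨x₀, hx₀E, hx₀max⟩ := E.exists_max_image r hE
  set E' := E.filter (· ∉ ball x₀ (r x₀))
  have hE' : E' ⊂ E :=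
    Finset.filter_ssubset.mpr ⟨x₀, hx₀E, not_not.mpr (mem_ball_self (hr x₀ hx₀E))⟩
  obtain ⟨N, x, hxE', hinc, hcov⟩ := ih E' hE' fun y hy => hr y (Finset.mem_filter.mp hy).1
  have hxE : ∀ i, x i ∈ E := fun i => (Finset.mem_filter.mp (hxE' i)).1
  refine ⟨N + 1, Fin.cons x₀ x, Fin.cases hx₀E hxE, ?_, ?_⟩
  · rw [← Function.comp_def r, Fin.comp_cons]
    exact hinc.cons (fun i => hx₀max _ (hxE i)) fun i => (Finset.mem_filter.mp (hxE' i)).2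
  · intro e he
    by_cases hb : e ∈ ball x₀ (r x₀)
    · exact ⟨0, by simpa using hb⟩
    · obtain ⟨i, hi⟩ := hcov e (Finset.mem_filter.mpr ⟨he, hb⟩)
      exact ⟨i.succ, by simpa using hi⟩

end

/-- If every incremental sequence of balls in `X` (non-increasing radii, each center
outside all previous balls) has multiplicity at most `C`, then from every carpet over a
finite set `E` one can extract a subfamily which, ordered by non-increasing radius, is
incremental, covers `E`, and has multiplicity at most `C`. -/
theorem carpet_has_incremental_cover {X : Type*} [MetricSpace X] (C : ℕ)
    (hinc_mult : ∀ (N : ℕ) (x : Fin N → X) (ρ : Fin N → ℝ),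
      (∀ i, 0 < ρ i) → (∀ i j : Fin N, i ≤ j → ρ j ≤ ρ i) →
      (∀ i j : Fin N, j < i → x i ∉ Metric.ball (x j) (ρ j)) →
      ∀ z : X, Set.ncard {i : Fin N | z ∈ Metric.ball (x i) (ρ i)} ≤ C)
    (E : Finset X) (r : X → ℝ) (hr : ∀ x ∈ E, 0 < r x) :
    ∃ (N : ℕ) (x : Fin N → X),
      Function.Injective x ∧
      (∀ i, x i ∈ E) ∧
      (∀ i j : Fin N, i ≤ j → r (x j) ≤ r (x i)) ∧
      (∀ i j : Fin N, j < i → x i ∉ Metric.ball (x j) (r (x j))) ∧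
      (∀ e ∈ E, ∃ i : Fin N, e ∈ Metric.ball (x i) (r (x i))) ∧
      (∀ z : X, Set.ncard {i : Fin N | z ∈ Metric.ball (x i) (r (x i))} ≤ C) := by
  obtain ⟨N, x, hxE, hinc, hcov⟩ := exists_incremental_cover r E hr
  have hpos : ∀ i, 0 < r (x i) := fun i => hr _ (hxE i)
  exact ⟨N, x, hinc.injective hpos, hxE, hinc.antitone, hinc.notMem_ball, hcov,
    hinc_mult N x _ hpos hinc.antitone hinc.notMem_ball⟩
end

section
/- Let $\|\cdot\|$ be a norm on $\mathbb{R}^d$. Then there exist $R_0>1$ and $k\in\mathbb{N}$ with the following property: whenever $r(1)\ge r(2)\ge\dots\ge r(k)\ge R_0$ and $x_1,\dots,x_k\in\mathbb{R}^d$ satisfy $x_i\notin\bigcup_{j<i}B_{r(j)-1}(x_j)$ for each $i$, then $\bigcap_{i=1}^{k}\partial_1 B_{r(i)}(x_i)=\emptyset$. -/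
/-- For any norm on `ℝ^d` (formalized as a finite-dimensional real normed space) there
are `R₀ > 1` and `k ∈ ℕ` such that for any non-increasing radii `r(1) ≥ … ≥ r(k) ≥ R₀`
and points `x₁, …, x_k` with `xᵢ ∉ ⋃_{j<i} B_{r(j)-1}(x_j)`, the thick spheres
`∂₁B_{r(i)}(x_i) = B_{r(i)+1}(x_i) \ B_{r(i)-1}(x_i)` have empty intersection. -/
theorem thick_spheres_empty_intersection {E : Type*} [NormedAddCommGroup E]
    [NormedSpace ℝ E] [FiniteDimensional ℝ E] :
    ∃ R0 : ℝ, 1 < R0 ∧ ∃ k : ℕ,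
      ∀ (r : Fin k → ℝ) (x : Fin k → E),
        (∀ i j : Fin k, i ≤ j → r j ≤ r i) →
        (∀ i : Fin k, R0 ≤ r i) →
        (∀ i j : Fin k, j < i → x i ∉ Metric.ball (x j) (r j - 1)) →
        ¬ ∃ z : E, ∀ i : Fin k,
            z ∈ Metric.ball (x i) (r i + 1) \ Metric.ball (x i) (r i - 1) := by
  -- cover the unit sphere by finitely many balls of radius 1/4
  obtain ⟨t, ht⟩ : ∃ t : Finset E,
      Metric.sphere (0 : E) 1 ⊆ ⋃ y ∈ t, Metric.ball y (1/4) := by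
    have hc : IsCompact (Metric.sphere (0 : E) 1) := isCompact_sphere 0 1
    obtain ⟨t, ht⟩ := hc.elim_finite_subcover (fun y : E => Metric.ball y (1/4))
      (fun y => Metric.isOpen_ball)
      (fun p hp => Set.mem_iUnion.2 ⟨p, Metric.mem_ball_self (by norm_num)⟩)
    exact ⟨t, ht⟩
  refine ⟨13, by norm_num, t.card + 1, ?_⟩
  intro r x hmono hR hsep ⟨z, hz⟩
  -- distances from z to the centers
  set a : Fin (t.card + 1) → ℝ := fun i => ‖z - x i‖ with ha_def
  have ha_lb : ∀ i, r i - 1 ≤ a i := by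
    intro i
    have h2 := (hz i).2
    rw [Metric.mem_ball, dist_eq_norm] at h2
    exact le_of_not_gt h2
  have ha_ub : ∀ i, a i < r i + 1 := by
    intro i
    have h1 := (hz i).1
    rw [Metric.mem_ball, dist_eq_norm] at h1
    exact h1
  have ha12 : ∀ i, (12 : ℝ) ≤ a i := fun i => by
    have h1 := ha_lb i; have h2 := hR i; linarith
  have ha_pos : ∀ i, (0 : ℝ) < a i := fun i => lt_of_lt_of_le (by norm_num) (ha12 i)
  -- unit vectors
  set u : Fin (t.card + 1) → E := fun i => (a i)⁻¹ • (z - x i) with hu_def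
  have hu_norm : ∀ i, ‖u i‖ = 1 := by
    intro i
    have hne : a i ≠ 0 := ne_of_gt (ha_pos i)
    simp only [hu_def, norm_smul, norm_inv, Real.norm_eq_abs,
      abs_of_pos (ha_pos i)]
    exact inv_mul_cancel₀ hne
  have hu_smul : ∀ i, a i • u i = z - x i := by
    intro i
    simp only [hu_def, smul_smul]
    rw [mul_inv_cancel₀ (ne_of_gt (ha_pos i)), one_smul]
  -- key separation bound
  have key : ∀ i j : Fin (t.card + 1), j < i → (1/2 : ℝ) ≤ ‖u i - u j‖ := by
    intro i j hji
    have hrji : r i ≤ r j := hmono j i hji.le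
    have hc : r j - 1 ≤ ‖x i - x j‖ := by
      have h := hsep i j hji
      rw [Metric.mem_ball, dist_eq_norm] at h
      exact le_of_not_gt h
    have hdiff : a i • u i - a j • u j = x j - x i := by
      rw [hu_smul, hu_smul]; abel
    have hnorm_eq : ‖a i • u i - a j • u j‖ = ‖x i - x j‖ := by
      rw [hdiff, norm_sub_rev]
    have htri : ‖x i - x j‖ ≤ a i * ‖u i - u j‖ + |a i - a j| := by
      have hsplit : a i • u i - a j • u j = a i • (u i - u j) + (a i - a j) • u j := by
        module
      calc ‖x i - x j‖ = ‖a i • (u i - u j) + (a i - a j) • u j‖ := by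
            rw [← hnorm_eq, hsplit]
        _ ≤ ‖a i • (u i - u j)‖ + ‖(a i - a j) • u j‖ := norm_add_le _ _
        _ = a i * ‖u i - u j‖ + |a i - a j| := by
            rw [norm_smul, norm_smul, Real.norm_eq_abs, Real.norm_eq_abs,
              abs_of_pos (ha_pos i), hu_norm j, mul_one]
    -- numeric bound: a i * ‖u i - u j‖ ≥ a i - 6 ≥ a i / 2
    have h1 : a i - 6 ≤ a i * ‖u i - u j‖ := by
      have haj_lb := ha_lb j
      have haj_ub := ha_ub j
      have hai_ub := ha_ub i
      have hai_lb := ha_lb i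
      rcases abs_cases (a i - a j) with ⟨habs, _⟩ | ⟨habs, _⟩ <;> linarith
    have h12 := ha12 i
    nlinarith [ha_pos i, norm_nonneg (u i - u j)]
  -- pigeonhole: two unit vectors in the same small ball
  have hmem : ∀ i : Fin (t.card + 1), ∃ y ∈ t, u i ∈ Metric.ball y (1/4) := by
    intro i
    have hs : u i ∈ Metric.sphere (0 : E) 1 := by
      simp [mem_sphere_iff_norm, hu_norm i]
    have := ht hs
    simpa using this
  choose f hf hfb using hmem
  have hcard : t.card < Fintype.card (Fin (t.card + 1)) := by simp
  obtain ⟨i, _, j, _, hij, hfij⟩ :=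
    Finset.exists_ne_map_eq_of_card_lt_of_maps_to hcard
      (fun i _ => hf i : ∀ i ∈ Finset.univ, f i ∈ t)
  have hclose : ‖u i - u j‖ < 1/2 := by
    have hi := hfb i
    have hj := hfb j
    rw [Metric.mem_ball] at hi hj
    rw [hfij] at hi
    calc ‖u i - u j‖ = dist (u i) (u j) := (dist_eq_norm _ _).symm
      _ ≤ dist (u i) (f j) + dist (f j) (u j) := dist_triangle _ _ _
      _ = dist (u i) (f j) + dist (u j) (f j) := by rw [dist_comm (f j)]
      _ < 1/4 + 1/4 := add_lt_add hi hj
      _ = 1/2 := by norm_num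
  rcases lt_or_gt_of_ne hij with h | h
  · have hk := key j i h
    rw [norm_sub_rev] at hk
    linarith
  · have hk := key i j h
    linarith
end

section
/- Let $\|\cdot\|$ be a norm on $\mathbb{R}^d$. Then $\mathbb{R}^d$, with the metric induced by $\|\cdot\|$, has finite coarse dimension: there exist $R_0>1$ and $k\in\mathbb{N}$ such that $\mathrm{cdim}_{R_0}(\mathbb{R}^d)\le k$. -/
/-- `CdimLT X n R0 S` means that the subset `S` of the metric space `X`, with its induced
metric, has coarse dimension `< n` at scales `≥ R0`, i.e. `cdim_{R0} S ≤ n - 1`.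
For `n = 0` this means `S = ∅` (coarse dimension `≤ -1`); for `n = k+1` it means that for
every `t ≥ 1`, every `r ≥ t·R0` and every `x ∈ S`, the `t`-boundary
`∂_t B_r(x) = B_{r+t}(x) \ B_{r-t}(x)` computed inside `S` has coarse dimension `≤ k - 1`
at scales `≥ t·R0`. -/
def CdimLT (X : Type*) [MetricSpace X] : ℕ → ℝ → Set X → Prop
  | 0, _, S => S = ∅
  | (k + 1), R0, S => ∀ t : ℝ, 1 ≤ t → ∀ ρ : ℝ, t * R0 ≤ ρ → ∀ x ∈ S,
      CdimLT X k (t * R0) (S ∩ (Metric.ball x (ρ + t) \ Metric.ball x (ρ - t)))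

/-!
Take `R₀ = 100`. A failure of `cdim_{R₀} ≤ k` unwinds into points `x₀, …, x_{n-1}, y`, `n = k + 1`,
with radii `ρ_i` and widths `t_i ≥ 1` such that every later point, and `y`, lies at distance
`ρ_i ± t_i` from `x_i`, where `100 t_i ≤ ρ_j` whenever `i ≤ j`. Sort the indices by the scale
`⌊log₄ ρ_i⌋`. Points of one scale `v` are `4^v/2`-separated and within `8·4^v` of each other, so a
scale holds boundedly many indices. If the scales of `i` and `j` differ by at least two, say
`ρ_j ≪ ρ_i` (then `i < j`, as `ρ` grows at most threefold along the sequence), the unit vectors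
from `x_i` and from `x_j` towards `y` are `1/2` apart; so each parity class holds boundedly many
scales. Both bounds are packing bounds from the compactness of the unit ball.
-/

open Metric Finset

section MetricSpace

variable {X : Type*} [MetricSpace X]

/-- A branch of the recursion defining `CdimLT X n σ S` that reaches a point `y` of the innermost
set. The scale `σ * t₀ * ⋯ * t_{i-1}` of the `i`-th step enters only through `σ * t i ≤ ρ j`
for `i ≤ j`. -/
structure AnnulusChain (σ : ℝ) (n : ℕ) (S : Set X) where
  t : Fin n → ℝ
  ρ : Fin n → ℝ
  x : Fin n → X
  y : X
  x_mem : ∀ i, x i ∈ S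
  y_mem : y ∈ S
  one_le_t : ∀ i, 1 ≤ t i
  mul_t_le_ρ : ∀ i j, i ≤ j → σ * t i ≤ ρ j
  dist_x_mem : ∀ i j, i < j → dist (x j) (x i) ∈ Set.Icc (ρ i - t i) (ρ i + t i)
  dist_y_mem : ∀ i, dist y (x i) ∈ Set.Icc (ρ i - t i) (ρ i + t i)

theorem dist_mem_Icc_of_mem_ball_diff_ball {z c : X} {ρ t : ℝ}
    (h : z ∈ ball c (ρ + t) \ ball c (ρ - t)) : dist z c ∈ Set.Icc (ρ - t) (ρ + t) :=
  ⟨not_lt.mp h.2, (mem_ball.mp h.1).le⟩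

def AnnulusChain.cons {n : ℕ} {σ t ρ : ℝ} {x : X} {S : Set X} (hσ : 0 ≤ σ) (ht : 1 ≤ t)
    (hρ : t * σ ≤ ρ) (hx : x ∈ S)
    (C : AnnulusChain (t * σ) n (S ∩ (ball x (ρ + t) \ ball x (ρ - t)))) :
    AnnulusChain σ (n + 1) S where
  t := Fin.cons t C.t
  ρ := Fin.cons ρ C.ρ
  x := Fin.cons x C.x
  y := C.y
  x_mem := Fin.cases hx fun i => (C.x_mem i).1
  y_mem := C.y_mem.1
  one_le_t := Fin.cases ht C.one_le_t
  mul_t_le_ρ i j hij := by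
    induction i using Fin.cases with
    | zero =>
      induction j using Fin.cases with
      | zero => simpa [mul_comm] using hρ
      | succ j =>
        have := C.mul_t_le_ρ j j le_rfl
        have := C.one_le_t j
        simp only [Fin.cons_zero, Fin.cons_succ]
        nlinarith [mul_nonneg (mul_nonneg (zero_le_one.trans ht) hσ) (sub_nonneg.mpr this)]
    | succ i =>
      induction j using Fin.cases with
      | zero => exact absurd hij (by simp)
      | succ j =>
        have := C.mul_t_le_ρ i j (Fin.succ_le_succ_iff.mp hij)
        have := C.one_le_t i
        simp only [Fin.cons_succ]
        nlinarith [mul_nonneg (sub_nonneg.mpr ht) (mul_nonneg hσ (zero_le_one.trans this))]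
  dist_x_mem i j hij := by
    induction j using Fin.cases with
    | zero => exact absurd hij (Fin.not_lt_zero i)
    | succ j =>
      induction i using Fin.cases with
      | zero => exact dist_mem_Icc_of_mem_ball_diff_ball (C.x_mem j).2
      | succ i => exact C.dist_x_mem i j (Fin.succ_lt_succ_iff.mp hij)
  dist_y_mem := Fin.cases (dist_mem_Icc_of_mem_ball_diff_ball C.y_mem.2) C.dist_y_mem

theorem cdimLT_of_isEmpty_annulusChain :
    ∀ (n : ℕ) {σ : ℝ} {S : Set X}, 0 ≤ σ → IsEmpty (AnnulusChain σ n S) → CdimLT X n σ S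
  | 0, _, _, _, h => Set.eq_empty_of_forall_notMem fun y hy => h.false
      ⟨Fin.elim0, Fin.elim0, Fin.elim0, y, (·.elim0), hy, (·.elim0), (·.elim0), (·.elim0),
        (·.elim0)⟩
  | n + 1, _, _, hσ, h => fun _ ht _ hρ _ hx =>
      cdimLT_of_isEmpty_annulusChain n (mul_nonneg (zero_le_one.trans ht) hσ) ⟨fun C => h.false (C.cons hσ ht hρ hx)⟩

namespace AnnulusChain

variable {n : ℕ} {S : Set X} (C : AnnulusChain (100 : ℝ) n S)

theorem ρ_pos (i : Fin n) : 0 < C.ρ i := by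
  linarith [C.mul_t_le_ρ i i le_rfl, C.one_le_t i]

theorem ρ_le_three_mul {i j : Fin n} (hij : i < j) : C.ρ j ≤ 3 * C.ρ i := by
  have htri := dist_triangle C.y (C.x i) (C.x j)
  rw [dist_comm (C.x i)] at htri
  linarith [(C.dist_y_mem j).1, (C.dist_y_mem i).2, (C.dist_x_mem i j hij).2,
    C.mul_t_le_ρ i i le_rfl, C.mul_t_le_ρ j j le_rfl, C.ρ_pos i]

noncomputable def scale (i : Fin n) : ℤ := Int.log 4 (C.ρ i)

theorem zpow_scale_le_ρ (i : Fin n) : (4 : ℝ) ^ C.scale i ≤ C.ρ i := by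
  exact_mod_cast Int.zpow_log_le_self (b := 4) (by norm_num) (C.ρ_pos i)

theorem ρ_lt_four_mul_zpow_scale (i : Fin n) : C.ρ i < 4 * (4 : ℝ) ^ C.scale i := by
  have := Int.lt_zpow_succ_log_self (b := 4) (by norm_num) (C.ρ i)
  rwa [Nat.cast_ofNat, zpow_add_one₀ four_ne_zero, mul_comm] at this

theorem four_mul_ρ_lt_of_scale_add_two_le {i j : Fin n} (h : C.scale j + 2 ≤ C.scale i) :
    4 * C.ρ j < C.ρ i := by
  have hpow : 16 * (4 : ℝ) ^ C.scale j ≤ (4 : ℝ) ^ C.scale i := by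
    calc 16 * (4 : ℝ) ^ C.scale j = (4 : ℝ) ^ (C.scale j + 2) := by
          rw [zpow_add₀ four_ne_zero]; norm_num [mul_comm]
      _ ≤ (4 : ℝ) ^ C.scale i := zpow_le_zpow_right₀ (by norm_num) h
  linarith [C.ρ_lt_four_mul_zpow_scale j, C.zpow_scale_le_ρ i]

theorem dist_x_mem_of_scale_eq {i j : Fin n} (hij : i ≠ j) (h : C.scale i = C.scale j) :
    dist (C.x i) (C.x j) ∈ Set.Icc ((4 : ℝ) ^ C.scale i / 2) (8 * (4 : ℝ) ^ C.scale i) := by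
  wlog hlt : i < j generalizing i j
  · rw [dist_comm, h]
    exact this hij.symm h.symm (lt_of_le_of_ne (not_lt.mp hlt) hij.symm)
  rw [dist_comm]
  have := C.dist_x_mem i j hlt
  constructor <;> linarith [this.1, this.2, C.mul_t_le_ρ i i le_rfl, C.zpow_scale_le_ρ i,
    C.ρ_lt_four_mul_zpow_scale i, zpow_pos (four_pos : (0 : ℝ) < 4) (C.scale i)]

end AnnulusChain

end MetricSpace

section NormedSpace

variable {E : Type*} [NormedAddCommGroup E] [NormedSpace ℝ E]

theorem norm_sub_le_sub_add_mul_norm_sub_normalize {a b : E} (hb : 0 < ‖b‖) (hba : ‖b‖ ≤ ‖a‖) :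
    ‖a - b‖ ≤ ‖a‖ - ‖b‖ + ‖b‖ * ‖‖a‖⁻¹ • a - ‖b‖⁻¹ • b‖ := by
  have ha : 0 < ‖a‖ := hb.trans_le hba
  have hsplit : a - b = (1 - ‖b‖ / ‖a‖) • a + ‖b‖ • (‖a‖⁻¹ • a - ‖b‖⁻¹ • b) := by
    rw [smul_sub, smul_smul, smul_smul, mul_inv_cancel₀ hb.ne', one_smul, sub_smul, one_smul,
      div_eq_mul_inv]
    abel
  have hcoeff : 0 ≤ 1 - ‖b‖ / ‖a‖ := sub_nonneg.mpr ((div_le_one ha).mpr hba)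
  calc ‖a - b‖ ≤ ‖(1 - ‖b‖ / ‖a‖) • a‖ + ‖‖b‖ • (‖a‖⁻¹ • a - ‖b‖⁻¹ • b)‖ :=
        hsplit ▸ norm_add_le _ _
    _ = ‖a‖ - ‖b‖ + ‖b‖ * ‖‖a‖⁻¹ • a - ‖b‖⁻¹ • b‖ := by
        rw [norm_smul, norm_smul, Real.norm_of_nonneg hcoeff, norm_norm, sub_mul,
          div_mul_cancel₀ _ ha.ne', one_mul]

def IsPackingBound (E : Type*) [NormedAddCommGroup E] (ε : ℝ) (N : ℕ) : Prop :=
  ∀ {ι : Type} (s : Finset ι) (p : ι → E) (c : E) (r : ℝ), 0 < r → (∀ i ∈ s, dist (p i) c ≤ r) →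
    (∀ i ∈ s, ∀ j ∈ s, i ≠ j → ε * r ≤ dist (p i) (p j)) → #s ≤ N

theorem exists_isPackingBound [FiniteDimensional ℝ E] {ε : ℝ} (hε : 0 < ε) :
    ∃ N, IsPackingBound E ε N := by
  obtain ⟨net, -, hnet, hcover⟩ :=
    finite_cover_balls_of_compact (isCompact_closedBall (0 : E) 1) (half_pos hε)
  refine ⟨hnet.toFinset.card, fun s p c r hr hp hsep => ?_⟩
  have hnear : ∀ i ∈ s, ∃ q ∈ net, dist (r⁻¹ • (p i - c)) q < ε / 2 := by
    intro i hi
    have hmem : r⁻¹ • (p i - c) ∈ closedBall (0 : E) 1 := by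
      rw [mem_closedBall, dist_zero_right, norm_smul, norm_inv, Real.norm_of_nonneg hr.le,
        ← dist_eq_norm]
      exact inv_mul_le_one_of_le₀ (hp i hi) hr.le
    simpa only [Set.mem_iUnion, mem_ball, exists_prop] using hcover hmem
  choose! f hf_mem hf_near using hnear
  refine card_le_card_of_injOn f (fun i hi => hnet.mem_toFinset.mpr (hf_mem i hi)) ?_
  intro i hi j hj hfij
  by_contra hij
  have hclose : dist (r⁻¹ • (p i - c)) (r⁻¹ • (p j - c)) < ε := by
    calc _ ≤ dist (r⁻¹ • (p i - c)) (f i) + dist (r⁻¹ • (p j - c)) (f j) := by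
          rw [hfij]; exact dist_triangle_right _ _ _
      _ < ε / 2 + ε / 2 := add_lt_add (hf_near i hi) (hf_near j hj)
      _ = ε := add_halves ε
  rw [dist_smul₀, dist_sub_right, Real.norm_of_nonneg (inv_nonneg.mpr hr.le),
    inv_mul_lt_iff₀ hr] at hclose
  exact (hsep i hi j hj hij).not_gt (by linarith)

end NormedSpace

namespace AnnulusChain

variable {E : Type*} [NormedAddCommGroup E] {n : ℕ} {S : Set E} (C : AnnulusChain (100 : ℝ) n S)

theorem card_scale_fiber_le {N : ℕ} (hN : IsPackingBound E (1 / 16) N) (v : ℤ) :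
    #{i | C.scale i = v} ≤ N := by
  rcases Finset.eq_empty_or_nonempty {i | C.scale i = v} with hempty | ⟨a, ha⟩
  · simp [hempty]
  rw [mem_filter] at ha
  refine hN _ C.x (C.x a) (8 * 4 ^ v) (by positivity) (fun i hi => ?_) (fun i hi j hj hij => ?_)
  <;> rw [mem_filter] at *
  · rcases eq_or_ne i a with rfl | hia
    · rw [dist_self]; positivity
    · simpa [hi.2] using (C.dist_x_mem_of_scale_eq hia (hi.2.trans ha.2.symm)).2
  · have := (C.dist_x_mem_of_scale_eq hij (hi.2.trans hj.2.symm)).1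
    rw [hi.2] at this
    linarith

section NormedSpace

variable [NormedSpace ℝ E]

noncomputable def dir (i : Fin n) : E := ‖C.y - C.x i‖⁻¹ • (C.y - C.x i)

theorem norm_dir (i : Fin n) : ‖C.dir i‖ = 1 := by
  have hpos : 0 < ‖C.y - C.x i‖ := by
    rw [← dist_eq_norm]
    linarith [(C.dist_y_mem i).1, C.mul_t_le_ρ i i le_rfl, C.one_le_t i]
  rw [dir, norm_smul, norm_inv, norm_norm, inv_mul_cancel₀ hpos.ne']

theorem half_le_norm_dir_sub {i j : Fin n} (hij : i < j) (hρ : 2 * C.ρ j ≤ C.ρ i) :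
    1 / 2 ≤ ‖C.dir i - C.dir j‖ := by
  obtain ⟨hxi_lo, -⟩ := C.dist_x_mem i j hij
  obtain ⟨hyi_lo, hyi_hi⟩ := C.dist_y_mem i
  obtain ⟨hyj_lo, hyj_hi⟩ := C.dist_y_mem j
  have hti := C.mul_t_le_ρ i j hij.le
  have htj := C.mul_t_le_ρ j j le_rfl
  have hρj := C.ρ_pos j
  rw [dist_eq_norm] at hxi_lo hyi_lo hyi_hi hyj_lo hyj_hi
  have hsub : (C.y - C.x i) - (C.y - C.x j) = C.x j - C.x i := by abel
  have key := norm_sub_le_sub_add_mul_norm_sub_normalize (a := C.y - C.x i) (b := C.y - C.x j)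
    (by linarith) (by linarith)
  rw [hsub] at key
  change _ ≤ _ + _ * ‖C.dir i - C.dir j‖ at key
  -- `key` bounds `‖y - x j‖ * (1 - ‖dir i - dir j‖)` by `2 * t i ≤ ρ j / 50`.
  by_contra! hlt
  nlinarith

theorem half_le_norm_dir_sub_of_scale_add_two_le {i j : Fin n} (h : C.scale j + 2 ≤ C.scale i) :
    1 / 2 ≤ ‖C.dir i - C.dir j‖ := by
  have hρ := C.four_mul_ρ_lt_of_scale_add_two_le h
  rcases lt_trichotomy i j with hij | rfl | hji
  · exact C.half_le_norm_dir_sub hij (by linarith [C.ρ_pos j])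
  · linarith [C.ρ_pos i]
  · linarith [C.ρ_le_three_mul hji, C.ρ_pos j]

theorem card_le_of_pairwise_scale_gap {N : ℕ} (hN : IsPackingBound E (1 / 2) N)
    {u : Finset (Fin n)}
    (hu : ∀ i ∈ u, ∀ j ∈ u, i ≠ j → C.scale j + 2 ≤ C.scale i ∨ C.scale i + 2 ≤ C.scale j) :
    #u ≤ N := by
  refine hN u C.dir 0 1 one_pos (fun i _ => by rw [dist_zero_right, C.norm_dir]) ?_
  intro i hi j hj hij
  rw [mul_one, dist_eq_norm]
  rcases hu i hi j hj hij with h | h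
  · exact C.half_le_norm_dir_sub_of_scale_add_two_le h
  · rw [norm_sub_rev]; exact C.half_le_norm_dir_sub_of_scale_add_two_le h

theorem card_image_scale_le {N : ℕ} (hN : IsPackingBound E (1 / 2) N) :
    #(univ.image C.scale) ≤ 2 * N := by
  obtain ⟨u, -, hinj, himage⟩ := Finset.exists_subset_injOn_image_eq_of_surjOn (f := C.scale)
    Set.univ (univ.image C.scale) (fun v hv => by simpa using hv)
  have hgap : ∀ v ⊆ u, (∀ i ∈ v, ∀ j ∈ v, C.scale i % 2 = C.scale j % 2) → #v ≤ N :=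
    fun v hv hpar => C.card_le_of_pairwise_scale_gap hN fun i hi j hj hij => by
      have hne : C.scale i ≠ C.scale j := fun h => hij (hinj (hv hi) (hv hj) h)
      have := hpar i hi j hj
      omega
  rw [← himage]
  calc #(u.image C.scale) = #u := card_image_of_injOn hinj
    _ = #{i ∈ u | C.scale i % 2 = 0} + #{i ∈ u | ¬C.scale i % 2 = 0} :=
        (card_filter_add_card_filter_not _).symm
    _ ≤ N + N := by
        gcongr <;> refine hgap _ (filter_subset _ _) fun i hi j hj => ?_ <;>
          simp only [mem_filter] at hi hj <;> omega
    _ = 2 * N := (two_mul N).symm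

end NormedSpace

end AnnulusChain

theorem isEmpty_annulusChain_of_lt {E : Type*} [NormedAddCommGroup E] [NormedSpace ℝ E]
    {S : Set E} {n N₁ N₂ : ℕ} (h₁ : IsPackingBound E (1 / 2) N₁)
    (h₂ : IsPackingBound E (1 / 16) N₂) (hn : N₂ * (2 * N₁) < n) :
    IsEmpty (AnnulusChain (100 : ℝ) n S) := by
  refine ⟨fun C => hn.not_ge ?_⟩
  calc n = #(univ : Finset (Fin n)) := (card_fin n).symm
    _ ≤ N₂ * #(univ.image C.scale) :=
        card_le_mul_card_image _ _ fun v _ => C.card_scale_fiber_le h₂ v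
    _ ≤ N₂ * (2 * N₁) := Nat.mul_le_mul_left _ (C.card_image_scale_le h₁)

/-- `ℝ^d` with the metric induced by an arbitrary norm (formalized as a finite-dimensional
real normed space) has finite coarse dimension: there are `R0 > 1` and `k ∈ ℕ` with
`cdim_{R0}(ℝ^d) ≤ k`. -/
theorem finite_coarse_dimension {E : Type*} [NormedAddCommGroup E]
    [NormedSpace ℝ E] [FiniteDimensional ℝ E] :
    ∃ R0 : ℝ, 1 < R0 ∧ ∃ k : ℕ, CdimLT E (k + 1) R0 Set.univ := by
  obtain ⟨N₁, h₁⟩ := exists_isPackingBound (E := E) (ε := 1 / 2) (by norm_num)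
  obtain ⟨N₂, h₂⟩ := exists_isPackingBound (E := E) (ε := 1 / 16) (by norm_num)
  exact ⟨100, by norm_num, N₂ * (2 * N₁), cdimLT_of_isEmpty_annulusChain _ (by norm_num)
    (isEmpty_annulusChain_of_lt h₁ h₂ (Nat.lt_succ_self _))⟩
end

section
/- Let $G$ be a countable group and $(B_r)_{r\ge 1}$ an increasing sequence of finite symmetric subsets of $G$ with $\bigcap_r B_r=\{e\}$, and suppose $(B_r)$ does not satisfy the Besicovitch covering property with constant $C$ for any $C\in\mathbb{N}$. Then for every $M>0$ there exist $t>0$ and finite nonempty sets $U,V\subseteq G$ such that $|V|>\frac{M}{t}|U|$ and for every $x\in V$ there is an $n$ with $|U\cap B_n x|>t\,|V\cap B_n x|$. (Consequently, for the action of $G$ on itself by left translation with counting measure, taking $f=1_U$ and $h=1_V$ one gets $\mu_h\{x:\sup_n R_n(f,h)(x)>t\}=|V|>\frac{M}{t}\int f$, so the ratio maximal inequality fails for this action.) -/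
/-!
Run the Vitali greedy selection on a finite family of translates `B_{n(g)} g`, taking centres
in order of decreasing radius and keeping a centre only if no kept translate contains it. Since
the `B_r` are increasing and symmetric, the kept centres are separated: no kept translate contains
another kept centre. If Besicovitch fails with constant `C`, some point `x` lies in more than `C`
kept translates; their centres form `V`, and with `U = {x}` and `t = 1/2` every `y ∈ V` sees
exactly one point of `U` and one point of `V` in its own translate.
-/

open Finset

/-- The sequence `(B_r)` of finite subsets of a group `G` satisfies the Besicovitch
covering property with constant `C` if: whenever `E ⊆ G` is finite and to each `g ∈ E` a
translate `B_{n(g)}·g` is assigned, some subfamily of these translates covers `E` while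
no element of `G` lies in more than `C` of the chosen translates. -/
def BesicovitchCovering {G : Type*} [Group G] (B : ℕ → Finset G) (C : ℕ) : Prop :=
  ∀ (E : Finset G) (n : G → ℕ), ∃ S : Finset G, S ⊆ E ∧
    (∀ x ∈ E, ∃ g ∈ S, x * g⁻¹ ∈ B (n g)) ∧
    ∀ x : G, Set.ncard {g : G | g ∈ S ∧ x * g⁻¹ ∈ B (n g)} ≤ C

section SeparatedCover

variable {G ι : Type*} [Group G] [LinearOrder ι] {B : ι → Finset G}

theorem exists_separated_subcover (hmono : Monotone B) (hsym : ∀ r, ∀ g ∈ B r, g⁻¹ ∈ B r)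
    (hone : ∀ r, (1 : G) ∈ B r) (n : G → ι) (E : Finset G) :
    ∃ S ⊆ E, (∀ x ∈ E, ∃ g ∈ S, x * g⁻¹ ∈ B (n g)) ∧
      ∀ a ∈ S, ∀ b ∈ S, a ≠ b → a * b⁻¹ ∉ B (n b) := by
  classical
  induction E using Finset.induction_on_min_value n with
  | empty => exact ⟨∅, subset_refl _, by simp, by simp⟩
  | insert a E _ hmin ih =>
    obtain ⟨S, hSE, hcov, hsep⟩ := ih
    by_cases hcovered : ∃ g ∈ S, a * g⁻¹ ∈ B (n g)
    · refine ⟨S, hSE.trans (subset_insert _ _), fun x hx => ?_, hsep⟩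
      rcases mem_insert.1 hx with rfl | hx
      exacts [hcovered, hcov x hx]
    push Not at hcovered
    refine ⟨insert a S, insert_subset_insert _ hSE, fun x hx => ?_, ?_⟩
    · rcases mem_insert.1 hx with rfl | hx
      · exact ⟨x, mem_insert_self _ _, by simpa using hone (n x)⟩
      · obtain ⟨g, hg, hxg⟩ := hcov x hx
        exact ⟨g, mem_insert_of_mem hg, hxg⟩
    intro b hb c hc hbc
    rcases mem_insert.1 hb with rfl | hbS <;> rcases mem_insert.1 hc with rfl | hcS
    · exact absurd rfl hbc
    · exact hcovered c hcS
    -- `c` has the smallest radius, so `B (n c) ⊆ B (n b)`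
    · exact fun h => hcovered b hbS (by simpa using hsym _ _ (hmono (hmin b (hSE hbS)) h))
    · exact hsep b hbS c hcS hbc

end SeparatedCover

theorem exists_separated_overlap_of_not_besicovitchCovering {G : Type*} [Group G]
    {B : ℕ → Finset G} {C : ℕ} (hmono : Monotone B) (hsym : ∀ r, ∀ g ∈ B r, g⁻¹ ∈ B r)
    (hone : ∀ r, (1 : G) ∈ B r) (h : ¬ BesicovitchCovering B C) :
    ∃ (n : G → ℕ) (x : G) (V : Finset G), C < #V ∧ (∀ y ∈ V, x * y⁻¹ ∈ B (n y)) ∧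
      ∀ a ∈ V, ∀ b ∈ V, a ≠ b → a * b⁻¹ ∉ B (n b) := by
  classical
  unfold BesicovitchCovering at h
  push Not at h
  obtain ⟨E, n, hE⟩ := h
  obtain ⟨S, hSE, hcov, hsep⟩ := exists_separated_subcover hmono hsym hone n E
  obtain ⟨x, hx⟩ := hE S hSE hcov
  rw [← coe_filter, Set.ncard_coe_finset] at hx
  exact ⟨n, x, S.filter (fun g => x * g⁻¹ ∈ B (n g)), hx, fun y hy => (mem_filter.1 hy).2,
    fun a ha b hb => hsep a (mem_filter.1 ha).1 b (mem_filter.1 hb).1⟩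

theorem ncard_mem_and_mul_inv_mem_eq_one {G : Type*} [Group G] {V s : Finset G} {y : G}
    (hy : y ∈ V) (hone : (1 : G) ∈ s) (hsep : ∀ a ∈ V, a ≠ y → a * y⁻¹ ∉ s) :
    Set.ncard {g : G | g ∈ V ∧ g * y⁻¹ ∈ s} = 1 := by
  refine Set.ncard_eq_one.2 ⟨y, Set.ext fun g => ⟨fun ⟨hg, hgs⟩ => ?_, ?_⟩⟩
  · by_contra hne
    exact hsep g hg hne hgs
  · rintro rfl
    exact ⟨hy, by simpa using hone⟩

theorem translation_action_maximal_fails_general {G : Type} [Group G]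
    (B : ℕ → Finset G)
    (hmono : Monotone B)
    (hsym : ∀ r : ℕ, ∀ g ∈ B r, g⁻¹ ∈ B r)
    (hint : ⋂ r : ℕ, (B r : Set G) = {1})
    (hnotbes : ∀ C : ℕ, ¬ BesicovitchCovering B C) :
    ∀ M : ℝ, 0 < M →
      ∃ t : ℝ, 0 < t ∧
        ∃ U V : Finset G, U.Nonempty ∧ V.Nonempty ∧
          (M / t) * (U.card : ℝ) < (V.card : ℝ) ∧
          ∀ x ∈ V, ∃ n : ℕ,
            t * (Set.ncard {g : G | g ∈ V ∧ g * x⁻¹ ∈ B n} : ℝ) <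
              (Set.ncard {g : G | g ∈ U ∧ g * x⁻¹ ∈ B n} : ℝ) := by
  intro M _
  have hone : ∀ r, (1 : G) ∈ B r := fun r => by
    exact_mod_cast Set.mem_iInter.1 (hint.symm ▸ Set.mem_singleton (1 : G)) r
  obtain ⟨n, x, V, hCV, hxV, hsep⟩ :=
    exists_separated_overlap_of_not_besicovitchCovering hmono hsym hone (hnotbes ⌈2 * M⌉₊)
  refine ⟨1 / 2, by norm_num, {x}, V, singleton_nonempty x, card_pos.1 (by omega), ?_,
    fun y hy => ⟨n y, ?_⟩⟩
  · have : (⌈2 * M⌉₊ : ℝ) < #V := by exact_mod_cast hCV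
    have := (Nat.le_ceil (2 * M)).trans_lt this
    simp only [card_singleton, Nat.cast_one, mul_one, one_div, div_inv_eq_mul]
    linarith
  · have hU : Set.ncard {g : G | g ∈ ({x} : Finset G) ∧ g * y⁻¹ ∈ B (n y)} = 1 :=
      Set.ncard_eq_one.2 ⟨x, by ext g; simpa using fun hg => hg ▸ hxV y hy⟩
    rw [hU, ncard_mem_and_mul_inv_mem_eq_one hy (hone _) fun a ha hay => hsep a ha y hy hay]
    norm_num

/-- If an increasing symmetric sequence `(B_r)` with `⋂ B_r = {e}` in a countable group
fails the Besicovitch covering property for every constant, then for every `M > 0` there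
are `t > 0` and finite nonempty sets `U, V ⊆ G` with `|V| > (M/t)|U|` such that every
`x ∈ V` satisfies `|U ∩ B_n x| > t·|V ∩ B_n x|` for some `n`. -/
theorem translation_action_maximal_fails {G : Type} [Group G] [Countable G]
    (B : ℕ → Finset G)
    (hmono : Monotone B)
    (hsym : ∀ r : ℕ, ∀ g ∈ B r, g⁻¹ ∈ B r)
    (hint : ⋂ r : ℕ, (B r : Set G) = {1})
    (hnotbes : ∀ C : ℕ, ¬ BesicovitchCovering B C) :
    ∀ M : ℝ, 0 < M →
      ∃ t : ℝ, 0 < t ∧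
        ∃ U V : Finset G, U.Nonempty ∧ V.Nonempty ∧
          (M / t) * (U.card : ℝ) < (V.card : ℝ) ∧
          ∀ x ∈ V, ∃ n : ℕ,
            t * (Set.ncard {g : G | g ∈ V ∧ g * x⁻¹ ∈ B n} : ℝ) <
              (Set.ncard {g : G | g ∈ U ∧ g * x⁻¹ ∈ B n} : ℝ) :=
  translation_action_maximal_fails_general B hmono hsym hint hnotbes
end
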